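/- Let λ ∈ ℂⁿ be constant on each block, let σ be an admissible permutation, and let j ∈ {1,…,n} with j ∉ σ({m_1,…,m_k}). Then (id⊗ϖ)(M̂^{σ·λ}_j) = 0, where M̂^{σ·λ}_j is the U_q(gl_n)-submodule of ℂⁿ ⊗ M̂_{σ·λ} generated by the singular vector û_j formed from the weight σ·λ. -/

import Mathlib

noncomputable section

namespace QGL

/-! ### q-numbers.  Throughout, `q = exp ħ` and `q^z = exp (ħ z)` for `z : ℂ`. -/

/-- `q = exp ħ`. -/
def qh (h : ℂ) : ℂ := Complex.exp h

/-- `q^z = exp (ħ z)` for a complex exponent `z`. -/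
def qz (h z : ℂ) : ℂ := Complex.exp (h * z)

/-- the symmetric q-number `[z]_q = (q^z - q^{-z})/(q - q⁻¹)`. -/
def bq (h z : ℂ) : ℂ := (qz h z - qz h (-z)) / (qh h - (qh h)⁻¹)

/-- `q` is not a root of unity. -/
def NotRootOfUnity (q : ℂ) : Prop := ∀ m : ℕ, 0 < m → q ^ m ≠ 1

/-! ### The quantum nilpotent algebra `U_q(n₋)` (≅ `U_q(n₊)`), by generators and relations. -/

/-- Generators `f_1, …, f_{n-1}` (0-based: `f_0, …, f_{n-2}`). -/
inductive NGen (n : ℕ) : Type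
  | f : Fin (n-1) → NGen n

/-- The q-Serre relations of `U_q(n₋)`. -/
inductive NRel (n : ℕ) (q : ℂ) :
    FreeAlgebra ℂ (NGen n) → FreeAlgebra ℂ (NGen n) → Prop
  | serre (i j : Fin (n-1)) (h : (i:ℕ)+1 = j ∨ (j:ℕ)+1 = i) :
      NRel n q
        (FreeAlgebra.ι ℂ (NGen.f i) * FreeAlgebra.ι ℂ (NGen.f i) * FreeAlgebra.ι ℂ (NGen.f j)
          + FreeAlgebra.ι ℂ (NGen.f j) * FreeAlgebra.ι ℂ (NGen.f i) * FreeAlgebra.ι ℂ (NGen.f i))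
        ((q + q⁻¹) •
          (FreeAlgebra.ι ℂ (NGen.f i) * FreeAlgebra.ι ℂ (NGen.f j) * FreeAlgebra.ι ℂ (NGen.f i)))
  | comm (i j : Fin (n-1)) (h : (i:ℕ)+2 ≤ j ∨ (j:ℕ)+2 ≤ i) :
      NRel n q (FreeAlgebra.ι ℂ (NGen.f i) * FreeAlgebra.ι ℂ (NGen.f j))
        (FreeAlgebra.ι ℂ (NGen.f j) * FreeAlgebra.ι ℂ (NGen.f i))

/-- `U_q(n₋)` (equally `U_q(n₊)`). -/
abbrev Un (n : ℕ) (q : ℂ) := RingQuot (NRel n q)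

/-- The generator `f_i` (0-based) of `U_q(n₋)`. -/
def uf (n : ℕ) (q : ℂ) (i : Fin (n-1)) : Un n q :=
  RingQuot.mkAlgHom ℂ (NRel n q) (FreeAlgebra.ι ℂ (NGen.f i))

/-- `f_a` for a natural-number index (junk value `0` out of range). -/
def ufn (n : ℕ) (q : ℂ) (a : ℕ) : Un n q :=
  if h : a < n - 1 then uf n q ⟨a, h⟩ else 0

/-- The monomial `f_{a-1} ⋯ f_1 f_0` (`= 1` for `a = 0`). -/
def mon (n : ℕ) (q : ℂ) : ℕ → Un n q
  | 0 => 1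
  | a+1 => ufn n q a * mon n q a

/-- The left ideal of `U_q(n₋)` generated by `f_0 ^ 2` and the `f_i`, `i ≥ 1` (0-based). -/
def Jideal (n : ℕ) (q : ℂ) : Submodule (Un n q) (Un n q) :=
  Submodule.span (Un n q)
    ({ufn n q 0 * ufn n q 0} ∪ {x | ∃ i : Fin (n-1), 1 ≤ (i:ℕ) ∧ x = uf n q i})

/-- Inclusion `Fin (n-1) → Fin n`, `j ↦ j`. -/
def clo (n : ℕ) (j : Fin (n-1)) : Fin n := ⟨j, by have := j.isLt; omega⟩

/-- Inclusion `Fin (n-1) → Fin n`, `j ↦ j+1`. -/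
def chi (n : ℕ) (j : Fin (n-1)) : Fin n := ⟨(j:ℕ)+1, by have := j.isLt; omega⟩

/-- The natural action of the generator `f_i` on `ℂⁿ`:  `w_j ↦ δ_{ij} w_{j+1}` (0-based). -/
def natF (n : ℕ) (i : Fin (n-1)) : (Fin n → ℂ) →ₗ[ℂ] (Fin n → ℂ) :=
  (LinearMap.single ℂ (fun _ : Fin n => ℂ) (chi n i)).comp (LinearMap.proj (clo n i))

/-! ### The quantum group `U_q(gl_n)` by generators and relations. -/

/-- Generators `K_i, K_i⁻¹` (`i : Fin n`) and `e_j, f_j` (`j : Fin (n-1)`), 0-based. -/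
inductive Gen (n : ℕ) : Type
  | K : Fin n → Gen n
  | Kinv : Fin n → Gen n
  | E : Fin (n-1) → Gen n
  | F : Fin (n-1) → Gen n

/-- Kronecker delta with values in `ℤ`. -/
def dlt {n : ℕ} (i j : Fin n) : ℤ := if i = j then 1 else 0

open FreeAlgebra in
/-- The defining relations of `U_q(gl_n)`. -/
inductive GLRel (n : ℕ) (q : ℂ) :
    FreeAlgebra ℂ (Gen n) → FreeAlgebra ℂ (Gen n) → Prop
  | KKinv (i : Fin n) : GLRel n q (ι ℂ (Gen.K i) * ι ℂ (Gen.Kinv i)) 1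
  | KinvK (i : Fin n) : GLRel n q (ι ℂ (Gen.Kinv i) * ι ℂ (Gen.K i)) 1
  | KK (i j : Fin n) : GLRel n q (ι ℂ (Gen.K i) * ι ℂ (Gen.K j)) (ι ℂ (Gen.K j) * ι ℂ (Gen.K i))
  | KE (i : Fin n) (j : Fin (n-1)) :
      GLRel n q (ι ℂ (Gen.K i) * ι ℂ (Gen.E j))
        ((q ^ (dlt i (clo n j) - dlt i (chi n j))) • (ι ℂ (Gen.E j) * ι ℂ (Gen.K i)))
  | KF (i : Fin n) (j : Fin (n-1)) :
      GLRel n q (ι ℂ (Gen.K i) * ι ℂ (Gen.F j))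
        ((q ^ (dlt i (chi n j) - dlt i (clo n j))) • (ι ℂ (Gen.F j) * ι ℂ (Gen.K i)))
  | EF (i j : Fin (n-1)) :
      GLRel n q (ι ℂ (Gen.E i) * ι ℂ (Gen.F j) - ι ℂ (Gen.F j) * ι ℂ (Gen.E i))
        (if i = j then
          ((q - q⁻¹)⁻¹) •
            (ι ℂ (Gen.K (clo n i)) * ι ℂ (Gen.Kinv (chi n i))
              - ι ℂ (Gen.Kinv (clo n i)) * ι ℂ (Gen.K (chi n i)))
         else 0)
  | serreE (i j : Fin (n-1)) (h : (i:ℕ)+1 = j ∨ (j:ℕ)+1 = i) :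
      GLRel n q
        (ι ℂ (Gen.E i) * ι ℂ (Gen.E i) * ι ℂ (Gen.E j)
          + ι ℂ (Gen.E j) * ι ℂ (Gen.E i) * ι ℂ (Gen.E i))
        ((q + q⁻¹) • (ι ℂ (Gen.E i) * ι ℂ (Gen.E j) * ι ℂ (Gen.E i)))
  | serreF (i j : Fin (n-1)) (h : (i:ℕ)+1 = j ∨ (j:ℕ)+1 = i) :
      GLRel n q
        (ι ℂ (Gen.F i) * ι ℂ (Gen.F i) * ι ℂ (Gen.F j)
          + ι ℂ (Gen.F j) * ι ℂ (Gen.F i) * ι ℂ (Gen.F i))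
        ((q + q⁻¹) • (ι ℂ (Gen.F i) * ι ℂ (Gen.F j) * ι ℂ (Gen.F i)))
  | commE (i j : Fin (n-1)) (h : (i:ℕ)+2 ≤ j ∨ (j:ℕ)+2 ≤ i) :
      GLRel n q (ι ℂ (Gen.E i) * ι ℂ (Gen.E j)) (ι ℂ (Gen.E j) * ι ℂ (Gen.E i))
  | commF (i j : Fin (n-1)) (h : (i:ℕ)+2 ≤ j ∨ (j:ℕ)+2 ≤ i) :
      GLRel n q (ι ℂ (Gen.F i) * ι ℂ (Gen.F j)) (ι ℂ (Gen.F j) * ι ℂ (Gen.F i))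

/-- The quantum group `U_q(gl_n)`. -/
abbrev Uq (n : ℕ) (q : ℂ) := RingQuot (GLRel n q)

def uK (n : ℕ) (q : ℂ) (i : Fin n) : Uq n q :=
  RingQuot.mkAlgHom ℂ (GLRel n q) (FreeAlgebra.ι ℂ (Gen.K i))

def uKinv (n : ℕ) (q : ℂ) (i : Fin n) : Uq n q :=
  RingQuot.mkAlgHom ℂ (GLRel n q) (FreeAlgebra.ι ℂ (Gen.Kinv i))

def uE (n : ℕ) (q : ℂ) (j : Fin (n-1)) : Uq n q :=
  RingQuot.mkAlgHom ℂ (GLRel n q) (FreeAlgebra.ι ℂ (Gen.E j))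

def uF (n : ℕ) (q : ℂ) (j : Fin (n-1)) : Uq n q :=
  RingQuot.mkAlgHom ℂ (GLRel n q) (FreeAlgebra.ι ℂ (Gen.F j))

/-- `U_q(gl_n)` with `q = exp ħ`. -/
abbrev UQ (n : ℕ) (h : ℂ) := Uq n (qh h)

/-- `K_a` for a natural-number index (junk value `1` out of range). -/
def uKn (n : ℕ) (h : ℂ) (a : ℕ) : UQ n h := if ha : a < n then uK n (qh h) ⟨a, ha⟩ else 1

/-- `K_a⁻¹` for a natural-number index (junk value `1` out of range). -/
def uKinvn (n : ℕ) (h : ℂ) (a : ℕ) : UQ n h := if ha : a < n then uKinv n (qh h) ⟨a, ha⟩ else 1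

/-- `e_a` for a natural-number index (junk value `0` out of range). -/
def uEn (n : ℕ) (h : ℂ) (a : ℕ) : UQ n h := if ha : a < n - 1 then uE n (qh h) ⟨a, ha⟩ else 0

/-- `f_a` for a natural-number index (junk value `0` out of range). -/
def uFn (n : ℕ) (h : ℂ) (a : ℕ) : UQ n h := if ha : a < n - 1 then uF n (qh h) ⟨a, ha⟩ else 0

/-! ### Verma modules. -/

/-- The left ideal generated by the `e_j` and the `K_i - q^{λ_i}`. -/
def VermaIdeal (n : ℕ) (h : ℂ) (lam : Fin n → ℂ) : Submodule (UQ n h) (UQ n h) :=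
  Submodule.span (UQ n h)
    ({x | ∃ j : Fin (n-1), x = uE n (qh h) j} ∪
     {x | ∃ i : Fin n, x = uK n (qh h) i - algebraMap ℂ (UQ n h) (qz h (lam i))})

/-- The Verma module `M̂_λ`. -/
abbrev Verma (n : ℕ) (h : ℂ) (lam : Fin n → ℂ) := UQ n h ⧸ VermaIdeal n h lam

/-- The highest-weight generator `v_λ` of `M̂_λ`. -/
def vv (n : ℕ) (h : ℂ) (lam : Fin n → ℂ) : Verma n h lam := Submodule.Quotient.mk 1

/-! ### Dynamical root vectors. -/

/-- The Cartan coefficient `C(c) = (q^c K_{a+1} K_b⁻¹ - q^{-c} K_{a+1}⁻¹ K_b)/(q - q⁻¹)`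
(0-based indices). -/
def Cc (n : ℕ) (h : ℂ) (a b c : ℕ) : UQ n h :=
  ((qh h - (qh h)⁻¹)⁻¹) •
    ((qh h ^ c) • (uKn n h (a+1) * uKinvn n h b)
      - ((qh h)⁻¹ ^ c) • (uKinvn n h (a+1) * uKn n h b))

/-- The dynamical root vector `f̌_{ε_a - ε_b}` (0-based indices `a < b < n`). -/
def fcheck (n : ℕ) (h : ℂ) (a b : ℕ) : UQ n h :=
  if hb : b ≤ a + 1 then uFn n h a
  else uFn n h a * fcheck n h (a+1) b * Cc n h a b (b-a-1)
    - fcheck n h (a+1) b * uFn n h a * Cc n h a b (b-a-2)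
termination_by b - a
decreasing_by all_goals omega

/-- `f̌_{ε_a - ε_b}` extended by the convention `f̌_0 = 1`. -/
def fcheckE (n : ℕ) (h : ℂ) (a b : ℕ) : UQ n h := if a = b then 1 else fcheck n h a b

/-- `λ_a` for a natural-number index (junk value `0` out of range). -/
def lamn (n : ℕ) (lam : Fin n → ℂ) (a : ℕ) : ℂ := if ha : a < n then lam ⟨a, ha⟩ else 0

/-! ### The module `ℂⁿ ⊗ Y`, realized on `Fin n → Y` via `Σ_i w_i ⊗ y_i ↔ (y_i)_i`. -/

section Tensor

variable (n : ℕ) (h : ℂ) {Y : Type*} [AddCommGroup Y] [Module ℂ Y] [Module (UQ n h) Y]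

/-- The action of `e_k` on `ℂⁿ ⊗ Y`:  `e_k(w ⊗ y) = e_k w ⊗ y + K_k K_{k+1}⁻¹ w ⊗ e_k y`. -/
def Etens (k : Fin (n-1)) (u : Fin n → Y) : Fin n → Y := fun j =>
  (if j = clo n k then u (chi n k) else 0)
    + (qh h ^ (dlt (clo n k) j - dlt (chi n k) j)) • (uE n (qh h) k • u j)

/-- The action of `f_k` on `ℂⁿ ⊗ Y`:  `f_k(w ⊗ y) = w ⊗ f_k y + f_k w ⊗ K_k⁻¹ K_{k+1} y`. -/
def Ftens (k : Fin (n-1)) (u : Fin n → Y) : Fin n → Y := fun j =>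
  (uF n (qh h) k • u j)
    + (if j = chi n k then (uKinv n (qh h) (clo n k) * uK n (qh h) (chi n k)) • u (clo n k) else 0)

/-- The action of `K_i` on `ℂⁿ ⊗ Y`:  `K_i(w ⊗ y) = K_i w ⊗ K_i y`. -/
def Ktens (i : Fin n) (u : Fin n → Y) : Fin n → Y := fun j =>
  (if i = j then qh h else 1) • (uK n (qh h) i • u j)

/-- The action of `K_i⁻¹` on `ℂⁿ ⊗ Y`:  `K_i⁻¹(w ⊗ y) = K_i⁻¹ w ⊗ K_i⁻¹ y`. -/
def Kinvtens (i : Fin n) (u : Fin n → Y) : Fin n → Y := fun j =>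
  (if i = j then (qh h)⁻¹ else 1) • (uKinv n (qh h) i • u j)

end Tensor

/-- `V̂^λ_c`: the smallest subspace of `ℂⁿ ⊗ M̂_λ` containing `w_p ⊗ v_λ` for `p < c`
(0-based) and stable under all `f_k`. -/
def Vhat (n : ℕ) (h : ℂ) (lam : Fin n → ℂ) (c : ℕ) : Submodule ℂ (Fin n → Verma n h lam) :=
  sInf {W | (∀ p : Fin n, (p:ℕ) < c → Pi.single p (vv n h lam) ∈ W) ∧
            ∀ (k : Fin (n-1)) x, x ∈ W → Ftens n h k x ∈ W}

/-- The coefficient `(-q)^a ∏_{j<a} [λ_j - λ_l + l - j - 1]_q` of `û_l` (0-based). -/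
def coefu (n : ℕ) (h : ℂ) (lam : Fin n → ℂ) (l a : ℕ) : ℂ :=
  (-(qh h))^a * ∏ j ∈ Finset.range a, bq h (lamn n lam j - lamn n lam l + (l:ℂ) - (j:ℂ) - 1)

/-- The vector `û_l = Σ_{a ≤ l} (-q)^a (∏_{j<a} [λ_j-λ_l+l-j-1]_q) · w_a ⊗ f̌_{ε_a-ε_l} v_λ`
(0-based `l`). -/
def uhat (n : ℕ) (h : ℂ) (lam : Fin n → ℂ) (l : ℕ) : Fin n → Verma n h lam := fun a =>
  if (a:ℕ) ≤ l then coefu n h lam l a • (fcheckE n h a l • vv n h lam) else 0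

/-- `M̂^λ_l`: the `U_q(gl_n)`-submodule of `ℂⁿ ⊗ M̂_λ` generated by `û_l` (0-based `l`). -/
def Mhat (n : ℕ) (h : ℂ) (lam : Fin n → ℂ) (l : ℕ) : Submodule ℂ (Fin n → Verma n h lam) :=
  sInf {W | uhat n h lam l ∈ W ∧
            (∀ (k : Fin (n-1)) x, x ∈ W → Etens n h k x ∈ W) ∧
            (∀ (k : Fin (n-1)) x, x ∈ W → Ftens n h k x ∈ W) ∧
            (∀ (i : Fin n) x, x ∈ W → Ktens n h i x ∈ W) ∧
            (∀ (i : Fin n) x, x ∈ W → Kinvtens n h i x ∈ W)}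

/-- The principal monomial `ψ_{ab} = f_a f_{a+1} ⋯ f_{b-1}` (0-based). -/
def psi (n : ℕ) (h : ℂ) (a b : ℕ) : UQ n h :=
  ((List.range (b - a)).map (fun t => uFn n h (a + t))).prod

/-! ### Blocks, admissible permutations, the shifted Weyl action. -/

/-- The 0-based starting position `o_i = n_1 + ⋯ + n_{i-1}` of the `i`-th block. -/
def ost (k : ℕ) (nn : Fin k → ℕ) (i : Fin k) : ℕ := ∑ j ∈ Finset.Iio i, nn j

/-- `a` and `b` lie in the same block. -/
def sameBlock (n k : ℕ) (nn : Fin k → ℕ) (a b : Fin n) : Prop :=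
  ∃ i : Fin k, ost k nn i ≤ (a:ℕ) ∧ (a:ℕ) < ost k nn i + nn i ∧
    ost k nn i ≤ (b:ℕ) ∧ (b:ℕ) < ost k nn i + nn i

/-- A permutation is admissible if it is increasing on each block. -/
def Admissible (n k : ℕ) (nn : Fin k → ℕ) (σ : Equiv.Perm (Fin n)) : Prop :=
  ∀ a b : Fin n, a < b → sameBlock n k nn a b → σ a < σ b

/-- The shifted action `σ·λ = σ(λ+ρ) - ρ`, with `ρ = (n-1, n-2, …, 0)`. -/
def sdot (n : ℕ) (σ : Equiv.Perm (Fin n)) (lam : Fin n → ℂ) : Fin n → ℂ := fun a =>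
  (lam (σ⁻¹ a) + ((n:ℂ) - 1 - (((σ⁻¹ a : Fin n) : ℕ) : ℂ))) - ((n:ℂ) - 1 - ((a:ℕ) : ℂ))

/-- The submodule of `M̂_{σ·λ}` generated by the singular vectors
`f̌_{ε_{σ(i)} - ε_{σ(i+1)}} v_{σ·λ}`, over all `i` with `i, i+1` in the same block. -/
def NSub (n : ℕ) (h : ℂ) (k : ℕ) (nn : Fin k → ℕ) (σ : Equiv.Perm (Fin n))
    (lam : Fin n → ℂ) : Submodule (UQ n h) (Verma n h (sdot n σ lam)) :=
  Submodule.span (UQ n h)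
    {x | ∃ (i : Fin n) (hi : (i:ℕ)+1 < n), sameBlock n k nn i ⟨(i:ℕ)+1, hi⟩ ∧
      x = fcheck n h ((σ i : Fin n) : ℕ) ((σ ⟨(i:ℕ)+1, hi⟩ : Fin n) : ℕ) • vv n h (sdot n σ lam)}

section Projection

variable (n : ℕ) (h : ℂ) {W : Type*} [AddCommGroup W] [Module ℂ W] [Module (UQ n h) W]
  [IsScalarTower ℂ (UQ n h) W] (N : Submodule (UQ n h) W)

/-- The map `id ⊗ ϖ : ℂⁿ ⊗ W → ℂⁿ ⊗ (W/N)` in the realization on `n`-tuples. -/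
def piMkQ : (Fin n → W) →ₗ[ℂ] (Fin n → W ⧸ N) where
  toFun u := fun j => Submodule.Quotient.mk (u j)
  map_add' u v := by funext j; simp
  map_smul' c u := by funext j; simp [← Submodule.Quotient.mk_smul]

end Projection

/-!
Write `μ = σ·λ` and `p = σ⁻¹ j`. As `p` does not start its block, `p - 1` and `p` share a
block, so `s := σ (p - 1) < j` by admissibility, `f̌_{ε_s - ε_j} v_μ` lies in the submodule `N`
defining `M_μ`, and constancy of `λ` on the block gives `μ_s - μ_j + j - s - 1 = 0`.
For `a > s` the coefficient of `w_a` in `û_j` contains the factor `[μ_s - μ_j + j - s - 1]_q = 0`.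
For `a < s`, `f̌_{ε_a - ε_j} v_μ ∈ N` by downward induction on `a`, applying the recursion
`f̌_{ε_a - ε_j} = f_a f̌_{ε_{a+1} - ε_j} C(j-a-1) - f̌_{ε_{a+1} - ε_j} f_a C(j-a-2)` to vectors
`f_{c_1} ⋯ f_{c_r} v_μ` with all `c_i < a`: the `C`'s act on these weight vectors by q-numbers,
`f̌_{ε_s - ε_j}` commutes with every `f_c`, `c < s - 1`, and at `a = s - 1` the second term dies
because `C(j-s-1)` acts by the same vanishing q-number.
Hence `û_j ∈ ℂⁿ ⊗ N`, which is a submodule, so `M̂_j ⊆ ℂⁿ ⊗ N = ker (id ⊗ ϖ)`.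
-/

section QNumbers

variable (h : ℂ)

lemma qz_add (a b : ℂ) : qz h (a + b) = qz h a * qz h b := by
  simp [qz, mul_add, Complex.exp_add]

lemma qz_neg (z : ℂ) : qz h (-z) = (qz h z)⁻¹ := by
  rw [qz, qz, ← Complex.exp_neg, mul_neg]

lemma qh_zpow (d : ℤ) : qh h ^ d = qz h d := by
  rw [qz, qh, mul_comm, Complex.exp_int_mul]

lemma qh_pow (c : ℕ) : qh h ^ c = qz h c := by
  rw [qz, qh, mul_comm, Complex.exp_nat_mul]

lemma inv_qh_pow (c : ℕ) : (qh h)⁻¹ ^ c = qz h (-c) := by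
  rw [inv_pow, qh_pow, qz_neg]

lemma bq_zero : bq h 0 = 0 := by simp [bq]

end QNumbers

section Relations

variable (n : ℕ) (q : ℂ)

lemma uK_mul_uKinv (i : Fin n) : uK n q i * uKinv n q i = 1 := by
  simpa [uK, uKinv] using RingQuot.mkAlgHom_rel ℂ (GLRel.KKinv (q := q) i)

lemma uKinv_mul_uK (i : Fin n) : uKinv n q i * uK n q i = 1 := by
  simpa [uK, uKinv] using RingQuot.mkAlgHom_rel ℂ (GLRel.KinvK (q := q) i)

lemma uK_mul_uF (i : Fin n) (j : Fin (n-1)) :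
    uK n q i * uF n q j = (q ^ (dlt i (chi n j) - dlt i (clo n j))) • (uF n q j * uK n q i) := by
  simpa [uK, uF] using RingQuot.mkAlgHom_rel ℂ (GLRel.KF (q := q) i j)

lemma commute_uF_uF (i j : Fin (n-1)) (hij : (i:ℕ) + 2 ≤ j ∨ (j:ℕ) + 2 ≤ i) :
    Commute (uF n q i) (uF n q j) := by
  rw [commute_iff_eq]
  simpa [uF] using RingQuot.mkAlgHom_rel ℂ (GLRel.commF (q := q) i j hij)

def uKUnit (i : Fin n) : (Uq n q)ˣ :=
  ⟨uK n q i, uKinv n q i, uK_mul_uKinv n q i, uKinv_mul_uK n q i⟩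

lemma commute_uK_uF {i : Fin n} {j : Fin (n-1)} (h1 : i ≠ clo n j) (h2 : i ≠ chi n j) :
    Commute (uK n q i) (uF n q j) := by
  simp [Commute, SemiconjBy, uK_mul_uF, dlt, h1, h2]

lemma commute_uKinv_uF {i : Fin n} {j : Fin (n-1)} (h1 : i ≠ clo n j) (h2 : i ≠ chi n j) :
    Commute (uKinv n q i) (uF n q j) :=
  Commute.units_inv_left (u := uKUnit n q i) (commute_uK_uF n q h1 h2)

end Relations

section Commutation

variable (n : ℕ) (h : ℂ)

lemma uFn_of_lt {c : ℕ} (hc : c < n - 1) : uFn n h c = uF n (qh h) ⟨c, hc⟩ := dif_pos hc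

lemma commute_uKn_uFn {m c : ℕ} (h1 : m ≠ c) (h2 : m ≠ c + 1) :
    Commute (uKn n h m) (uFn n h c) := by
  unfold uKn uFn
  split_ifs
  · exact commute_uK_uF n _ (by simp [clo, Fin.ext_iff, h1]) (by simp [chi, Fin.ext_iff, h2])
  all_goals simp

lemma commute_uKinvn_uFn {m c : ℕ} (h1 : m ≠ c) (h2 : m ≠ c + 1) :
    Commute (uKinvn n h m) (uFn n h c) := by
  unfold uKinvn uFn
  split_ifs
  · exact commute_uKinv_uF n _ (by simp [clo, Fin.ext_iff, h1]) (by simp [chi, Fin.ext_iff, h2])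
  all_goals simp

lemma commute_uFn_uFn {c d : ℕ} (hcd : c + 2 ≤ d) : Commute (uFn n h d) (uFn n h c) := by
  unfold uFn
  split_ifs
  · exact commute_uF_uF n _ _ _ (Or.inr hcd)
  all_goals simp

lemma commute_Cc_uFn {a b c : ℕ} (e : ℕ) (hca : c + 2 ≤ a) (hcb : c + 2 ≤ b) :
    Commute (Cc n h a b e) (uFn n h c) := by
  unfold Cc
  refine .smul_left (.sub_left (.smul_left (.mul_left ?_ ?_) _) (.smul_left (.mul_left ?_ ?_) _)) _
  · exact commute_uKn_uFn n h (by omega) (by omega)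
  · exact commute_uKinvn_uFn n h (by omega) (by omega)
  · exact commute_uKinvn_uFn n h (by omega) (by omega)
  · exact commute_uKn_uFn n h (by omega) (by omega)

lemma commute_fcheck_uFn {a c : ℕ} (b : ℕ) (hca : c + 2 ≤ a) :
    Commute (fcheck n h a b) (uFn n h c) := by
  rw [fcheck]
  split_ifs with hb
  · exact commute_uFn_uFn n h hca
  · have hrec := commute_fcheck_uFn b (a := a + 1) (c := c) (by omega)
    have hf := commute_uFn_uFn n h hca
    exact .sub_left ((hf.mul_left hrec).mul_left (commute_Cc_uFn n h _ hca (by omega)))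
      ((hrec.mul_left hf).mul_left (commute_Cc_uFn n h _ hca (by omega)))
termination_by b - a

end Commutation

section Weights

variable (n : ℕ) (h : ℂ) {Y : Type*} [AddCommGroup Y] [Module ℂ Y] [Module (UQ n h) Y]
  [IsScalarTower ℂ (UQ n h) Y]

def IsWeightVector (ν : Fin n → ℂ) (x : Y) : Prop :=
  ∀ i, uK n (qh h) i • x = qz h (ν i) • x

def shiftF (k : Fin (n-1)) (ν : Fin n → ℂ) : Fin n → ℂ := fun i =>
  ν i + ((dlt i (chi n k) - dlt i (clo n k) : ℤ) : ℂ)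

lemma lamn_val (ν : Fin n → ℂ) (i : Fin n) : lamn n ν i = ν i := dif_pos i.isLt

lemma lamn_shiftF_of_lt {k : Fin (n-1)} (ν : Fin n → ℂ) {i : ℕ} (hi : (k:ℕ) + 1 < i) :
    lamn n (shiftF n k ν) i = lamn n ν i := by
  unfold lamn
  split_ifs with hin
  · have h1 : (⟨i, hin⟩ : Fin n) ≠ chi n k := by simp only [chi, ne_eq, Fin.ext_iff]; omega
    have h2 : (⟨i, hin⟩ : Fin n) ≠ clo n k := by simp only [clo, ne_eq, Fin.ext_iff]; omega
    simp [shiftF, dlt, h1, h2]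
  · rfl

variable {n h}

lemma IsWeightVector.uKinv_smul {ν : Fin n → ℂ} {x : Y} (hx : IsWeightVector n h ν x) (i : Fin n) :
    uKinv n (qh h) i • x = qz h (-ν i) • x := by
  have hx' : x = qz h (ν i) • uKinv n (qh h) i • x := by
    rw [← smul_comm, ← hx i, smul_smul, uKinv_mul_uK, one_smul]
  conv_rhs => rw [hx', smul_smul, ← qz_add, neg_add_cancel, show qz h 0 = 1 by simp [qz], one_smul]

lemma IsWeightVector.uF_smul {ν : Fin n → ℂ} {x : Y} (hx : IsWeightVector n h ν x)
    (k : Fin (n-1)) : IsWeightVector n h (shiftF n k ν) (uF n (qh h) k • x) := by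
  intro i
  rw [smul_smul, uK_mul_uF, smul_assoc, mul_smul, hx i, smul_comm _ (qz h _), smul_smul,
    qh_zpow, ← qz_add, shiftF, add_comm (ν i)]

lemma IsWeightVector.Cc_smul {ν : Fin n → ℂ} {x : Y} (hx : IsWeightVector n h ν x)
    {a b : ℕ} (c : ℕ) (ha : a + 1 < n) (hb : b < n) :
    Cc n h a b c • x = bq h (c + lamn n ν (a + 1) - lamn n ν b) • x := by
  have hν : lamn n ν (a + 1) = ν ⟨a + 1, ha⟩ ∧ lamn n ν b = ν ⟨b, hb⟩ := ⟨dif_pos ha, dif_pos hb⟩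
  have hplus : (uKn n h (a + 1) * uKinvn n h b) • x = qz h (lamn n ν (a + 1) - lamn n ν b) • x := by
    rw [uKn, dif_pos ha, uKinvn, dif_pos hb, mul_smul, hx.uKinv_smul, smul_comm, hx, smul_smul,
      ← qz_add, hν.1, hν.2, add_comm, ← sub_eq_add_neg]
  have hminus :
      (uKinvn n h (a + 1) * uKn n h b) • x = qz h (-(lamn n ν (a + 1) - lamn n ν b)) • x := by
    rw [uKinvn, dif_pos ha, uKn, dif_pos hb, mul_smul, hx, smul_comm, hx.uKinv_smul, smul_smul,
      ← qz_add, hν.1, hν.2, neg_sub, sub_eq_neg_add, add_comm]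
  rw [Cc, smul_assoc, sub_smul, smul_assoc, smul_assoc, hplus, hminus, smul_smul, smul_smul,
    qh_pow, inv_qh_pow, ← qz_add, ← qz_add, ← sub_smul, smul_smul, bq, div_eq_inv_mul]
  ring_nf

lemma IsWeightVector.fcheck_smul_eq {ν : Fin n → ℂ} {x : Y} (hx : IsWeightVector n h ν x)
    {b j : ℕ} (hbj : b + 1 < j) (hj : j < n) :
    fcheck n h b j • x =
      bq h ((j - b - 1 : ℕ) + lamn n ν (b + 1) - lamn n ν j) •
          (uFn n h b • fcheck n h (b + 1) j • x)
        - bq h ((j - b - 2 : ℕ) + lamn n ν (b + 1) - lamn n ν j) •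
          (fcheck n h (b + 1) j • uFn n h b • x) := by
  rw [fcheck, dif_neg (by omega), sub_smul, mul_smul, mul_smul, mul_smul, mul_smul,
    hx.Cc_smul _ (by omega) hj, hx.Cc_smul _ (by omega) hj, smul_comm (fcheck n h _ _) (bq h _),
    smul_comm (uFn n h b) (bq h _), smul_comm (uFn n h b) (bq h _),
    smul_comm (fcheck n h _ _) (bq h _)]

end Weights

section Verma

variable {n : ℕ} {h : ℂ}

variable (n h)

lemma isWeightVector_vv (μ : Fin n → ℂ) : IsWeightVector n h μ (vv n h μ) := by
  intro i
  have hmem : uK n (qh h) i - algebraMap ℂ (UQ n h) (qz h (μ i)) ∈ VermaIdeal n h μ :=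
    Submodule.subset_span (Or.inr ⟨i, rfl⟩)
  rw [vv, ← Submodule.Quotient.mk_smul, smul_eq_mul, mul_one, (Submodule.Quotient.eq _).2 hmem,
    Algebra.algebraMap_eq_smul_one, Submodule.Quotient.mk_smul]

inductive FDescendant (μ : Fin n → ℂ) (b : ℕ) : (Fin n → ℂ) → Verma n h μ → Prop
  | base : FDescendant μ b μ (vv n h μ)
  | uF_smul (c : Fin (n-1)) {ν : Fin n → ℂ} {x : Verma n h μ} :
      (c : ℕ) < b → FDescendant μ b ν x → FDescendant μ b (shiftF n c ν) (uF n (qh h) c • x)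

variable {n h} {μ : Fin n → ℂ} {b : ℕ} {ν : Fin n → ℂ} {x : Verma n h μ}

lemma FDescendant.isWeightVector (hd : FDescendant n h μ b ν x) : IsWeightVector n h ν x := by
  induction hd with
  | base => exact isWeightVector_vv n h μ
  | uF_smul c _ _ hx => exact hx.uF_smul c

lemma FDescendant.mono (hd : FDescendant n h μ b ν x) {b' : ℕ} (hbb : b ≤ b') :
    FDescendant n h μ b' ν x := by
  induction hd with
  | base => exact .base
  | uF_smul c hc _ hx => exact .uF_smul c (by omega) hx

lemma FDescendant.lamn_eq_of_lt (hd : FDescendant n h μ b ν x) {i : ℕ} (hi : b < i) :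
    lamn n ν i = lamn n μ i := by
  induction hd with
  | base => rfl
  | uF_smul c hc _ hx => rw [lamn_shiftF_of_lt n _ (by omega), hx]

lemma FDescendant.fcheck_smul_mem (hd : FDescendant n h μ b ν x)
    (N : Submodule (UQ n h) (Verma n h μ)) {s j : ℕ} (hbs : b < s)
    (hgen : fcheck n h s j • vv n h μ ∈ N) : fcheck n h s j • x ∈ N := by
  induction hd with
  | base => exact hgen
  | uF_smul c hc _ hx =>
    rw [← uFn_of_lt n h c.isLt, ← mul_smul, (commute_fcheck_uFn n h j (by omega)).eq, mul_smul]
    exact N.smul_mem _ hx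

/-- `rw [zero_smul]` and `simp` do not match the `ℂ`-action on `Verma n h μ`, whose instance path
runs through two different ring structures on `UQ n h`; the term proof succeeds by unfolding. -/
lemma verma_zero_smul (y : Verma n h μ) : (0 : ℂ) • y = 0 := zero_smul ℂ y

section Descent

variable (N : Submodule (UQ n h) (Verma n h μ)) {s j : ℕ} (hsj : s < j) (hj : j < n)
  (hkey : lamn n μ s - lamn n μ j + j - s - 1 = 0) (hgen : fcheck n h s j • vv n h μ ∈ N)
include hsj hj hkey hgen

lemma FDescendant.fcheck_smul_mem_of_lt {b : ℕ} {ν : Fin n → ℂ} {x : Verma n h μ}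
    (hd : FDescendant n h μ b ν x) (hbs : b < s) :
    fcheck n h b j • x ∈ N := by
  rw [hd.isWeightVector.fcheck_smul_eq (by omega) hj]
  have hbn : b < n - 1 := by omega
  refine N.sub_mem (N.smul_of_tower_mem _ (N.smul_mem _ ?_)) ?_
  · rcases (show b + 1 = s ∨ b + 1 < s by omega) with rfl | hs
    · exact hd.fcheck_smul_mem N (lt_add_one b) hgen
    · exact (hd.mono b.le_succ).fcheck_smul_mem_of_lt hs
  · rcases (show b + 1 = s ∨ b + 1 < s by omega) with rfl | hs
    · have hzero : ((j - b - 2 : ℕ) : ℂ) + lamn n ν (b + 1) - lamn n ν j = 0 := by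
        rw [hd.lamn_eq_of_lt (lt_add_one b), hd.lamn_eq_of_lt (by omega), Nat.sub_sub,
          Nat.cast_sub (by omega)]
        push_cast at hkey ⊢
        linear_combination hkey
      rw [hzero, bq_zero, verma_zero_smul]
      exact N.zero_mem
    · rw [uFn_of_lt n h hbn]
      exact N.smul_of_tower_mem _
        (((hd.mono b.le_succ).uF_smul ⟨b, hbn⟩ (lt_add_one b)).fcheck_smul_mem_of_lt hs)
termination_by s - b

lemma fcheck_smul_vv_mem {a : ℕ} (has : a ≤ s) : fcheck n h a j • vv n h μ ∈ N := by
  rcases has.lt_or_eq with has | rfl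
  · exact FDescendant.base.fcheck_smul_mem_of_lt N hsj hj hkey hgen has
  · exact hgen

lemma uhat_mem (a : Fin n) : uhat n h μ j a ∈ N := by
  unfold uhat
  split_ifs with haj
  · rcases le_or_gt (a : ℕ) s with has | has
    · rw [fcheckE, if_neg (by omega)]
      exact N.smul_of_tower_mem _ (fcheck_smul_vv_mem N hsj hj hkey hgen has)
    · rw [coefu, Finset.prod_eq_zero (Finset.mem_range.2 has) (by rw [hkey, bq_zero]), mul_zero,
        verma_zero_smul]
      exact N.zero_mem
  · exact N.zero_mem

end Descent

end Verma

section Tensor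

variable {n : ℕ} {h : ℂ} {W : Type*} [AddCommGroup W] [Module ℂ W] [Module (UQ n h) W]
  [IsScalarTower ℂ (UQ n h) W] {N : Submodule (UQ n h) W}

lemma mem_ker_piMkQ {u : Fin n → W} : u ∈ LinearMap.ker (piMkQ n h N) ↔ ∀ a, u a ∈ N := by
  simp [piMkQ, funext_iff, Submodule.Quotient.mk_eq_zero]

lemma Etens_mem_ker {u : Fin n → W} (hu : u ∈ LinearMap.ker (piMkQ n h N)) (k : Fin (n-1)) :
    Etens n h k u ∈ LinearMap.ker (piMkQ n h N) := by
  rw [mem_ker_piMkQ] at hu ⊢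
  intro a
  refine N.add_mem ?_ (N.smul_of_tower_mem _ (N.smul_mem _ (hu a)))
  split_ifs
  exacts [hu _, N.zero_mem]

lemma Ftens_mem_ker {u : Fin n → W} (hu : u ∈ LinearMap.ker (piMkQ n h N)) (k : Fin (n-1)) :
    Ftens n h k u ∈ LinearMap.ker (piMkQ n h N) := by
  rw [mem_ker_piMkQ] at hu ⊢
  intro a
  refine N.add_mem (N.smul_mem _ (hu a)) ?_
  split_ifs
  exacts [N.smul_mem _ (hu _), N.zero_mem]

lemma Ktens_mem_ker {u : Fin n → W} (hu : u ∈ LinearMap.ker (piMkQ n h N)) (i : Fin n) :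
    Ktens n h i u ∈ LinearMap.ker (piMkQ n h N) := by
  rw [mem_ker_piMkQ] at hu ⊢
  exact fun a => N.smul_of_tower_mem _ (N.smul_mem _ (hu a))

lemma Kinvtens_mem_ker {u : Fin n → W} (hu : u ∈ LinearMap.ker (piMkQ n h N)) (i : Fin n) :
    Kinvtens n h i u ∈ LinearMap.ker (piMkQ n h N) := by
  rw [mem_ker_piMkQ] at hu ⊢
  exact fun a => N.smul_of_tower_mem _ (N.smul_mem _ (hu a))

lemma map_piMkQ_Mhat_eq_bot {μ : Fin n → ℂ} {l : ℕ} {N : Submodule (UQ n h) (Verma n h μ)}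
    (hu : ∀ a, uhat n h μ l a ∈ N) : (Mhat n h μ l).map (piMkQ n h N) = ⊥ := by
  rw [← LinearMap.le_ker_iff_map]
  exact sInf_le ⟨mem_ker_piMkQ.2 hu, fun _ _ => (Etens_mem_ker · _), fun _ _ => (Ftens_mem_ker · _),
    fun _ _ => (Ktens_mem_ker · _), fun _ _ => (Kinvtens_mem_ker · _)⟩

end Tensor

section Blocks

variable {k : ℕ} (nn : Fin k → ℕ)

lemma ost_of_val_eq_zero {i : Fin k} (hi : (i : ℕ) = 0) : ost k nn i = 0 := by
  rw [ost, Finset.sum_eq_zero]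
  intro a ha
  simp [Finset.mem_Iio, Fin.lt_def, hi] at ha

lemma ost_succ (i : Fin k) (hi : (i : ℕ) + 1 < k) :
    ost k nn ⟨i + 1, hi⟩ = ost k nn i + nn i := by
  have hIio : Finset.Iio (⟨i + 1, hi⟩ : Fin k) = insert i (Finset.Iio i) := by
    ext a
    simp only [Finset.mem_Iio, Finset.mem_insert, Fin.lt_def, Fin.ext_iff]
    omega
  rw [ost, ost, hIio, Finset.sum_insert (by simp), add_comm]

lemma ost_add_of_val_eq_pred {i : Fin k} (hi : (i : ℕ) = k - 1) :
    ost k nn i + nn i = ∑ a, nn a := by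
  have huniv : (Finset.univ : Finset (Fin k)) = insert i (Finset.Iio i) := by
    ext a
    simp only [Finset.mem_univ, Finset.mem_insert, Finset.mem_Iio, Fin.lt_def, Fin.ext_iff,
      true_iff]
    omega
  rw [ost, huniv, Finset.sum_insert (by simp), add_comm]

lemma exists_ost_le_lt {p : ℕ} (hp : p < ∑ i, nn i) :
    ∃ i : Fin k, ost k nn i ≤ p ∧ p < ost k nn i + nn i := by
  have hk : 0 < k := Nat.pos_of_ne_zero (by rintro rfl; simp at hp)
  set T := Finset.univ.filter (fun i => ost k nn i ≤ p)
  have hT : T.Nonempty := ⟨⟨0, hk⟩, by simp [T, ost_of_val_eq_zero nn (i := ⟨0, hk⟩) rfl]⟩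
  obtain ⟨-, hle⟩ := Finset.mem_filter.1 (T.max'_mem hT)
  refine ⟨T.max' hT, hle, ?_⟩
  by_contra! hge
  by_cases hlast : (T.max' hT : ℕ) + 1 < k
  · have hnext : ⟨_, hlast⟩ ∈ T := by simp [T, ost_succ nn _ hlast, hge]
    exact absurd (T.le_max' _ hnext) (by simp [Fin.le_def])
  · rw [ost_add_of_val_eq_pred nn (by omega)] at hge
    omega

lemma exists_sameBlock_succ_eq {n : ℕ} (hsum : ∑ i, nn i = n) (p : Fin n)
    (hp : ∀ i, (p : ℕ) ≠ ost k nn i) :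
    ∃ (a : Fin n) (ha : (a : ℕ) + 1 < n), (⟨a + 1, ha⟩ : Fin n) = p ∧
      sameBlock n k nn a ⟨a + 1, ha⟩ := by
  obtain ⟨i, hle, hlt⟩ := exists_ost_le_lt nn (p := p) (by omega)
  have hpos : ost k nn i < p := lt_of_le_of_ne hle (hp i).symm
  exact ⟨⟨p - 1, by omega⟩, by simp only; omega, Fin.ext (by simp only; omega), i,
    by simp only; omega⟩

end Blocks

lemma sdot_apply_perm (n : ℕ) (σ : Equiv.Perm (Fin n)) (lam : Fin n → ℂ) (a : Fin n) :
    sdot n σ lam (σ a) = lam a + (σ a : ℕ) - (a : ℕ) := by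
  rw [sdot, show σ⁻¹ (σ a) = a from σ.symm_apply_apply a]
  ring

lemma lamn_sdot_sub_of_sameBlock {n k : ℕ} {nn : Fin k → ℕ} {lam : Fin n → ℂ}
    (hconst : ∀ a b : Fin n, sameBlock n k nn a b → lam a = lam b) (σ : Equiv.Perm (Fin n))
    {a : Fin n} (ha : (a : ℕ) + 1 < n) (hsb : sameBlock n k nn a ⟨a + 1, ha⟩) :
    lamn n (sdot n σ lam) (σ a) - lamn n (sdot n σ lam) (σ ⟨a + 1, ha⟩)
      + (σ ⟨a + 1, ha⟩ : ℕ) - (σ a : ℕ) - 1 = 0 := by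
  rw [lamn_val, lamn_val, sdot_apply_perm, sdot_apply_perm, hconst _ _ hsb]
  push_cast
  ring

theorem projected_Mhat_vanishes_general (n k : ℕ) (nn : Fin k → ℕ)
    (hsum : ∑ i, nn i = n) (h : ℂ)
    (lam : Fin n → ℂ) (hconst : ∀ a b : Fin n, sameBlock n k nn a b → lam a = lam b)
    (σ : Equiv.Perm (Fin n)) (hσ : Admissible n k nn σ)
    (j : ℕ) (hjn : j < n)
    (hnot : ∀ (i' : Fin k) (p : Fin n), (p:ℕ) = ost k nn i' → ((σ p : Fin n) : ℕ) ≠ j) :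
    Submodule.map (piMkQ n h (NSub n h k nn σ lam)) (Mhat n h (sdot n σ lam) j) = ⊥ := by
  obtain ⟨a, ha, hap, hsb⟩ := exists_sameBlock_succ_eq nn hsum (σ⁻¹ ⟨j, hjn⟩)
    (fun i hi => hnot i _ hi (by simp))
  obtain rfl : ((σ ⟨a + 1, ha⟩ : Fin n) : ℕ) = j := by simp [hap]
  have hlt : σ a < σ ⟨a + 1, ha⟩ := hσ _ _ (by simp [Fin.lt_def]) hsb
  have hgen : fcheck n h (σ a) (σ ⟨a + 1, ha⟩) • vv n h (sdot n σ lam) ∈ NSub n h k nn σ lam :=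
    Submodule.subset_span ⟨a, ha, hsb, rfl⟩
  exact map_piMkQ_Mhat_eq_bot
    (uhat_mem _ hlt (σ _).isLt (lamn_sdot_sub_of_sameBlock hconst σ ha hsb) hgen)

theorem projected_Mhat_vanishes (n k : ℕ) (hn : 2 ≤ n) (hk : 2 ≤ k) (nn : Fin k → ℕ)
    (hpos : ∀ i, 0 < nn i) (hsum : ∑ i, nn i = n) (h : ℂ) (hq : NotRootOfUnity (qh h))
    (lam : Fin n → ℂ) (hconst : ∀ a b : Fin n, sameBlock n k nn a b → lam a = lam b)
    (σ : Equiv.Perm (Fin n)) (hσ : Admissible n k nn σ)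
    (j : ℕ) (hjn : j < n)
    (hnot : ∀ (i' : Fin k) (p : Fin n), (p:ℕ) = ost k nn i' → ((σ p : Fin n) : ℕ) ≠ j) :
    Submodule.map (piMkQ n h (NSub n h k nn σ lam)) (Mhat n h (sdot n σ lam) j) = ⊥ :=
  projected_Mhat_vanishes_general n k nn hsum h lam hconst σ hσ j hjn hnot

end QGL
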